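/- arXiv:1305.6534 — 2 statements merged into one kernel-verified Lean document; each statement's English description precedes it below -/
import Mathlib

section
/- The odd Farey graph 𝓕_odd is a tree, i.e., it is connected and contains no cycles. -/
/-- A vertex of the odd Farey graph: a pair `(s, t)` of coprime integers with `s` odd,
such that either `t > 0` (representing the irreducible rational `s/t` with odd numerator)
or `t = 0` and `s = 1` (representing `∞ = 1/0`). -/
def FareyOddVertex : Type :=
  {p : ℤ × ℤ // Odd p.1 ∧ IsCoprime p.1 p.2 ∧ (0 < p.2 ∨ (p.2 = 0 ∧ p.1 = 1))}

/-- The odd Farey graph: two distinct vertices `(s₁, t₁)` and `(s₂, t₂)` are adjacent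
if and only if `|s₁·t₂ − s₂·t₁| = 1`. -/
def fareyOdd : SimpleGraph FareyOddVertex where
  Adj v w := v ≠ w ∧ |v.1.1 * w.1.2 - w.1.1 * v.1.2| = 1
  symm := by
    constructor
    rintro v w ⟨hne, h⟩
    exact ⟨hne.symm, by rw [abs_sub_comm]; exact h⟩
  loopless := by
    constructor
    rintro v ⟨hne, -⟩
    exact hne rfl


/-!
Measure a vertex `s/t` by its denominator `t`. Adjacent vertices have different denominators
(equal ones would force `|s₁ - s₂| = 1` for two odd numerators), every vertex other than `∞` has
a neighbour with smaller denominator, and it has at most one. Descending along such neighbours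
joins every vertex to `∞`; and on a cycle, a vertex of largest denominator would have two
distinct lower neighbours.
-/

namespace SimpleGraph

variable {V α : Type*} {G : SimpleGraph V}

theorem connected_of_exists_adj_lt [Preorder α] [WellFoundedLT α] (f : V → α) (r : V)
    (hlower : ∀ v, v ≠ r → ∃ w, G.Adj v w ∧ f w < f v) : G.Connected := by
  have reach (v : V) : G.Reachable v r := by
    induction hv : f v using WellFoundedLT.induction generalizing v with
    | ind a ih =>
      by_cases hvr : v = r
      · exact hvr ▸ .rfl
      obtain ⟨w, hvw, hwv⟩ := hlower v hvr
      exact hvw.reachable.trans (ih _ (hv ▸ hwv) w rfl)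
  exact (connected_iff _).mpr ⟨fun v w => (reach v).trans (reach w).symm, ⟨r⟩⟩

theorem isAcyclic_of_lower_adj_unique [LinearOrder α] (f : V → α)
    (hne : ∀ ⦃v w⦄, G.Adj v w → f v ≠ f w)
    (hunique : ∀ ⦃v w₁ w₂⦄, G.Adj v w₁ → G.Adj v w₂ → f w₁ < f v → f w₂ < f v → w₁ = w₂) :
    G.IsAcyclic := by
  classical
  intro v c hc
  obtain ⟨u, hu, hmax⟩ := c.support.toFinset.exists_max_image f ⟨v, by simp⟩
  rw [List.mem_toFinset] at hu
  set c' := c.rotate u hu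
  have hc' : c'.IsCycle := hc.rotate hu
  have lower {w} (hw : w ∈ c'.support) (huw : G.Adj u w) : f w < f u :=
    (hmax w (by simpa [c'] using hw)).lt_of_ne (hne huw).symm
  have hsnd := c'.adj_snd hc'.not_nil
  have hpen := (c'.adj_penultimate hc'.not_nil).symm
  exact hc'.snd_ne_penultimate <| hunique hsnd hpen
    (lower (c'.getVert_mem_support _) hsnd) (lower (c'.getVert_mem_support _) hpen)

end SimpleGraph

namespace FareyOddVertex

def num (v : FareyOddVertex) : ℤ := v.1.1

def den (v : FareyOddVertex) : ℤ := v.1.2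

theorem odd_num (v : FareyOddVertex) : Odd v.num := v.2.1

theorem isCoprime_num_den (v : FareyOddVertex) : IsCoprime v.num v.den := v.2.2.1

theorem den_nonneg (v : FareyOddVertex) : 0 ≤ v.den :=
  v.2.2.2.elim le_of_lt fun h => h.1.ge

def infty : FareyOddVertex := ⟨(1, 0), odd_one, isCoprime_one_left, .inr ⟨rfl, rfl⟩⟩

@[simp] theorem num_infty : infty.num = 1 := rfl

@[simp] theorem den_infty : infty.den = 0 := rfl

theorem eq_infty_of_den_eq_zero {v : FareyOddVertex} (h : v.den = 0) : v = infty :=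
  v.2.2.2.elim (fun hpos => absurd h (ne_of_gt hpos)) fun h1 => Subtype.ext (Prod.ext h1.2 h)

def ofPos (s t : ℤ) (hs : Odd s) (hst : IsCoprime s t) (ht : 0 < t) : FareyOddVertex :=
  ⟨(s, t), hs, hst, .inl ht⟩

@[simp] theorem num_ofPos {s t : ℤ} (hs hst ht) : (ofPos s t hs hst ht).num = s := rfl

@[simp] theorem den_ofPos {s t : ℤ} (hs hst ht) : (ofPos s t hs hst ht).den = t := rfl

theorem ext_num_den {v w : FareyOddVertex} (hnum : v.num = w.num) (hden : v.den = w.den) :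
    v = w :=
  Subtype.ext (Prod.ext hnum hden)

end FareyOddVertex

/-- For `t ≥ 2`, pick `0 < r < t` with `s r - u t = 1`; then `u/r` is a lower neighbour of `s/t`
if `u` is odd, and `(s - u)/(t - r)` is one otherwise. -/
theorem Int.exists_lower_odd_farey_neighbor {s t : ℤ} (hs : Odd s) (hst : IsCoprime s t)
    (ht : 2 ≤ t) : ∃ a b, Odd a ∧ IsCoprime a b ∧ 0 < b ∧ b < t ∧ |s * b - a * t| = 1 := by
  obtain ⟨x, y, hxy⟩ := hst
  have hr₀ : 0 ≤ x % t := Int.emod_nonneg x (by omega)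
  have hrt : x % t < t := Int.emod_lt_of_pos x (by omega)
  obtain ⟨u, hu⟩ : t ∣ s * (x % t) - 1 :=
    ⟨-s * (x / t) - y, by linear_combination hxy + s * Int.emod_add_mul_ediv x t⟩
  have hr : 0 < x % t := by
    refine hr₀.lt_of_ne fun h => ?_
    rw [← h, mul_zero] at hu
    have := Int.eq_one_of_dvd_one (by omega) (⟨-u, by linear_combination -hu⟩ : t ∣ 1)
    omega
  by_cases hu_odd : Odd u
  · exact ⟨u, x % t, hu_odd, ⟨-t, s, by linear_combination hu⟩, hr, hrt,
      by rw [show s * (x % t) - u * t = 1 by linear_combination hu, abs_one]⟩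
  · refine ⟨s - u, t - x % t, hs.sub_even (Int.not_odd_iff_even.mp hu_odd),
      ⟨t, -s, by linear_combination hu⟩, by omega, by omega, ?_⟩
    rw [show s * (t - x % t) - (s - u) * t = -1 by linear_combination -hu, abs_neg, abs_one]

namespace fareyOdd

open FareyOddVertex

theorem adj_iff {v w : FareyOddVertex} : fareyOdd.Adj v w ↔ |v.num * w.den - w.num * v.den| = 1 :=
  ⟨And.right, fun h => ⟨by rintro rfl; simp at h, h⟩⟩

theorem den_ne_of_adj {v w : FareyOddVertex} (h : fareyOdd.Adj v w) : v.den ≠ w.den := by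
  intro hden
  rw [adj_iff, hden, ← sub_mul, abs_mul, abs_of_nonneg w.den_nonneg] at h
  have hdiff : |v.num - w.num| = 1 := Int.eq_one_of_mul_eq_one_right (abs_nonneg _) h
  have heven := v.odd_num.sub_odd w.odd_num
  rw [← even_abs, hdiff] at heven
  exact Int.not_even_one heven

/-- Two lower neighbours `w₁, w₂` of `v = s/t` satisfy `s (w₁.den ∓ w₂.den) = (w₁.num ∓ w₂.num) t`
according to the signs of their determinants; coprimality of `s, t` then forces `w₁ = w₂` in the
first case, and in the second either `w₁ = w₂ = ∞` or `s = w₁.num + w₂.num`, which is even. -/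
theorem eq_of_adj_of_den_lt {v w₁ w₂ : FareyOddVertex} (h₁ : fareyOdd.Adj v w₁)
    (h₂ : fareyOdd.Adj v w₂) (hlt₁ : w₁.den < v.den) (hlt₂ : w₂.den < v.den) : w₁ = w₂ := by
  have hpos₁ := w₁.den_nonneg
  have hpos₂ := w₂.den_nonneg
  have hcop := v.isCoprime_num_den.symm
  rw [adj_iff, abs_eq zero_le_one] at h₁ h₂
  have same (he : v.num * w₁.den - w₁.num * v.den = v.num * w₂.den - w₂.num * v.den) :
      w₁ = w₂ := by
    have hdvd : v.den ∣ w₁.den - w₂.den :=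
      hcop.dvd_of_dvd_mul_left ⟨w₁.num - w₂.num, by linear_combination he⟩
    have hden : w₁.den - w₂.den = 0 :=
      Int.eq_zero_of_abs_lt_dvd hdvd (abs_lt.mpr ⟨by omega, by omega⟩)
    refine ext_num_den (mul_right_cancel₀ (by omega : v.den ≠ 0) ?_) (by omega)
    linear_combination v.num * hden - he
  have opposite (he : v.num * w₁.den - w₁.num * v.den = -(v.num * w₂.den - w₂.num * v.den)) :
      w₁ = w₂ := by
    by_cases hzero : w₁.den + w₂.den = 0
    · rw [eq_infty_of_den_eq_zero (by omega : w₁.den = 0),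
        eq_infty_of_den_eq_zero (by omega : w₂.den = 0)]
    have hdvd : v.den ∣ w₁.den + w₂.den - v.den :=
      (hcop.dvd_of_dvd_mul_left ⟨w₁.num + w₂.num, by linear_combination he⟩).sub dvd_rfl
    have hsum : w₁.den + w₂.den - v.den = 0 :=
      Int.eq_zero_of_abs_lt_dvd hdvd (abs_lt.mpr ⟨by omega, by omega⟩)
    have hnum : v.num = w₁.num + w₂.num := by
      refine mul_right_cancel₀ (by omega : v.den ≠ 0) ?_
      linear_combination he - v.num * hsum
    have hodd := v.odd_num
    rw [hnum, Int.odd_add] at hodd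
    exact (Int.not_even_iff_odd.mpr w₂.odd_num (hodd.mp w₁.odd_num)).elim
  rcases h₁ with e₁ | e₁ <;> rcases h₂ with e₂ | e₂
  · exact same (by linarith)
  · exact opposite (by linarith)
  · exact opposite (by linarith)
  · exact same (by linarith)

theorem exists_adj_den_lt {v : FareyOddVertex} (hv : v ≠ infty) :
    ∃ w, fareyOdd.Adj v w ∧ w.den < v.den := by
  have hpos : 0 < v.den := v.den_nonneg.lt_of_ne' (mt eq_infty_of_den_eq_zero hv)
  obtain hone | htwo : v.den = 1 ∨ 2 ≤ v.den := by omega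
  · exact ⟨infty, adj_iff.mpr (by simp [hone]), by simpa using hpos⟩
  obtain ⟨a, b, ha, hab, hb, hbt, hdet⟩ :=
    Int.exists_lower_odd_farey_neighbor v.odd_num v.isCoprime_num_den htwo
  exact ⟨ofPos a b ha hab hb, adj_iff.mpr (by simpa using hdet), by simpa using hbt⟩

end fareyOdd

theorem stmt3 : fareyOdd.IsTree :=
  ⟨SimpleGraph.connected_of_exists_adj_lt (fun v => v.den.toNat) FareyOddVertex.infty
      fun _ hv => (fareyOdd.exists_adj_den_lt hv).imp fun w ⟨hvw, hlt⟩ =>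
        ⟨hvw, by have := w.den_nonneg; omega⟩,
    SimpleGraph.isAcyclic_of_lower_adj_unique FareyOddVertex.den
      (fun _ _ => fareyOdd.den_ne_of_adj) fun _ _ _ => fareyOdd.eq_of_adj_of_den_lt⟩
end

section
/- Let A, B, C, D be groups and let i : C → B and j : C → D be group homomorphisms. Then the pushout in the category of groups of the two homomorphisms id_A × i : A × C → A × B and id_A × j : A × C → A × D is isomorphic to the direct product A × (B *_C D), where B *_C D denotes the pushout of i and j. -/
/-!
In the pushout of the maps `id_A × φ_i`, the copy of `A` coming from the base `A × H` agrees with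
the copy of `A` in every factor `A × G_i`, so it commutes with the images of all the `G_i`. Hence
it and the map `PushoutI φ → PushoutI (id_A × φ)` induced by the right inclusions `G_i → A × G_i`
combine into a homomorphism out of `A × PushoutI φ`, inverse to the map given by the universal
property of the pushout.
-/

universe u

/-- The two-element family of types with value `B` at `false` and `D` at `true`. -/
def pairFam (B D : Type u) : Bool → Type u
  | false => B
  | true => D

instance pairFamGroup (B D : Type u) [Group B] [Group D] : ∀ b, Group (pairFam B D b)
  | false => inferInstanceAs (Group B)
  | true => inferInstanceAs (Group D)

/-- The pair of homomorphisms `i : C →* B` and `j : C →* D`, as a family indexed by `Bool`;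
the group pushout of `i` and `j` (the amalgamated free product `B *_C D`) is
`Monoid.PushoutI (pairHom i j)`. -/
def pairHom {C B D : Type u} [Group C] [Group B] [Group D]
    (i : C →* B) (j : C →* D) : ∀ b, C →* pairFam B D b
  | false => i
  | true => j

namespace Monoid.PushoutI

variable {ι : Type*} {G G' : ι → Type*} {H : Type*} [∀ i, Monoid (G i)] [∀ i, Monoid (G' i)]
  [Monoid H]

def congr {φ : ∀ i, H →* G i} {φ' : ∀ i, H →* G' i} (e : ∀ i, G i ≃* G' i)
    (he : ∀ i h, e i (φ i h) = φ' i h) : PushoutI φ ≃* PushoutI φ' :=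
  MonoidHom.toMulEquiv
    (lift (fun i => (of i).comp (e i).toMonoidHom) (base φ')
      fun i => MonoidHom.ext fun h => by simp [he, of_apply_eq_base])
    (lift (fun i => (of i).comp (e i).symm.toMonoidHom) (base φ)
      fun i => MonoidHom.ext fun h => by simp [← he, of_apply_eq_base])
    (hom_ext (fun i => MonoidHom.ext fun g => by simp) (MonoidHom.ext fun h => by simp))
    (hom_ext (fun i => MonoidHom.ext fun g => by simp) (MonoidHom.ext fun h => by simp))

variable (A : Type*) [Monoid A] (φ : ∀ i, H →* G i)

abbrev idProdMap : ∀ i, A × H →* A × G i := fun i => (MonoidHom.id A).prodMap (φ i)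

theorem base_inl_eq_of (i : ι) (a : A) :
    base (idProdMap A φ) (a, 1) = of (φ := idProdMap A φ) i (a, 1) := by
  rw [← of_apply_eq_base (idProdMap A φ) i]
  simp

def idProdMapToProd : PushoutI (idProdMap A φ) →* A × PushoutI φ :=
  lift (fun i => (MonoidHom.id A).prodMap (of i)) ((MonoidHom.id A).prodMap (base φ))
    fun i => MonoidHom.ext fun ⟨a, h⟩ => by simp [of_apply_eq_base]

def inrToIdProdMap : PushoutI φ →* PushoutI (idProdMap A φ) :=
  lift (fun i => (of i).comp (MonoidHom.inr A (G i)))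
    ((base (idProdMap A φ)).comp (MonoidHom.inr A H))
    fun i => MonoidHom.ext fun h => by simp [← of_apply_eq_base (idProdMap A φ) i]

theorem commute_base_inl_inrToIdProdMap (a : A) (x : PushoutI φ) :
    Commute (base (idProdMap A φ) (a, 1)) (inrToIdProdMap A φ x) := by
  induction x using induction_on with
  | of i g =>
    rw [base_inl_eq_of]
    simpa [inrToIdProdMap] using (MonoidHom.commute_inl_inr a g).map (of (φ := idProdMap A φ) i)
  | base h =>
    simpa [inrToIdProdMap] using (MonoidHom.commute_inl_inr a h).map (base (idProdMap A φ))
  | mul x y hx hy => rw [map_mul]; exact hx.mul_right hy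

def prodToIdProdMap : A × PushoutI φ →* PushoutI (idProdMap A φ) :=
  MonoidHom.noncommCoprod ((base (idProdMap A φ)).comp (MonoidHom.inl A H)) (inrToIdProdMap A φ)
    (commute_base_inl_inrToIdProdMap A φ)

theorem prodToIdProdMap_apply (a : A) (x : PushoutI φ) :
    prodToIdProdMap A φ (a, x) = base (idProdMap A φ) (a, 1) * inrToIdProdMap A φ x :=
  rfl

theorem idProdMapToProd_comp_inrToIdProdMap :
    (idProdMapToProd A φ).comp (inrToIdProdMap A φ) = MonoidHom.inr A (PushoutI φ) :=
  hom_ext (fun i => MonoidHom.ext fun g => by simp [idProdMapToProd, inrToIdProdMap])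
    (MonoidHom.ext fun h => by simp [idProdMapToProd, inrToIdProdMap])

theorem idProdMapToProd_comp_prodToIdProdMap :
    (idProdMapToProd A φ).comp (prodToIdProdMap A φ) = MonoidHom.id _ := by
  ext ⟨a, x⟩ : 1
  have hx := DFunLike.congr_fun (idProdMapToProd_comp_inrToIdProdMap A φ) x
  rw [MonoidHom.comp_apply, MonoidHom.inr_apply] at hx
  rw [MonoidHom.comp_apply, prodToIdProdMap_apply, map_mul, hx]
  simp [idProdMapToProd]

theorem prodToIdProdMap_comp_idProdMapToProd :
    (prodToIdProdMap A φ).comp (idProdMapToProd A φ) = MonoidHom.id _ := by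
  refine hom_ext (fun i => MonoidHom.ext fun ⟨a, g⟩ => ?_) (MonoidHom.ext fun ⟨a, h⟩ => ?_)
  · simp [prodToIdProdMap, idProdMapToProd, inrToIdProdMap, base_inl_eq_of A φ i, ← map_mul]
  · simp [prodToIdProdMap, idProdMapToProd, inrToIdProdMap, ← map_mul]

def idProdMapEquivProd : PushoutI (idProdMap A φ) ≃* A × PushoutI φ :=
  MonoidHom.toMulEquiv _ _ (prodToIdProdMap_comp_idProdMapToProd A φ)
    (idProdMapToProd_comp_prodToIdProdMap A φ)

end Monoid.PushoutI

/-- The two families agree at `false` and at `true`, but not definitionally as families. -/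
def pairFamProdEquiv (A B D : Type u) [Group A] [Group B] [Group D] :
    ∀ b, pairFam (A × B) (A × D) b ≃* A × pairFam B D b
  | false => MulEquiv.refl _
  | true => MulEquiv.refl _

theorem stmt4 {A B C D : Type u} [Group A] [Group B] [Group C] [Group D]
    (i : C →* B) (j : C →* D) :
    Nonempty
      (Monoid.PushoutI
          (pairHom ((MonoidHom.id A).prodMap i) ((MonoidHom.id A).prodMap j)) ≃*
        A × Monoid.PushoutI (pairHom i j)) :=
  ⟨(Monoid.PushoutI.congr (pairFamProdEquiv A B D) (by rintro (_ | _) _ <;> rfl)).trans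
    (Monoid.PushoutI.idProdMapEquivProd A (pairHom i j))⟩
end
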